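/- arXiv:1910.02512 — 4 statements merged into one kernel-verified Lean document; each statement's English description precedes it below -/
import Mathlib

section
/- The effective potential V(x,y) = -((α+2)/2)x² - (α+2)/(x²+y²)^(α/2) has exactly two critical points in the plane minus the origin, namely (α^(1/(α+2)), 0) and (-α^(1/(α+2)), 0). -/
/-- The effective potential of the Hill's lunar problem with homogeneous exponent `α`. -/
noncomputable def V (α x y : ℝ) : ℝ :=
  -((α + 2) / 2) * x ^ 2 - (α + 2) / (x ^ 2 + y ^ 2) ^ (α / 2)

/-- Partial derivative of `V` in `x`. -/
noncomputable def Vx (α x y : ℝ) : ℝ := deriv (fun t => V α t y) x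

/-- Partial derivative of `V` in `y`. -/
noncomputable def Vy (α x y : ℝ) : ℝ := deriv (fun t => V α x t) y

/-! On the plane minus the origin, with `r = x² + y²`,
`V_y = α (α + 2) y r^(-α/2 - 1)` vanishes exactly on the `x`-axis, and there
`V_x = (α + 2) x (α |x|^(-(α + 2)) - 1)` vanishes exactly when `|x|^(α + 2) = α`. -/

open Real

lemma V_eq_rpow_neg (α x y : ℝ) :
    V α x y = -((α + 2) / 2) * x ^ 2 - (α + 2) * (x ^ 2 + y ^ 2) ^ (-(α / 2)) := by
  rw [V, rpow_neg (by positivity), ← div_eq_mul_inv]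

lemma hasDerivAt_sq_add_rpow (c p t : ℝ) (h : t ^ 2 + c ≠ 0) :
    HasDerivAt (fun s => (s ^ 2 + c) ^ p) (2 * p * t * (t ^ 2 + c) ^ (p - 1)) t := by
  convert ((hasDerivAt_pow 2 t).add_const c).rpow_const (Or.inl h) using 1
  ring

lemma hasDerivAt_V_fst (α x y : ℝ) (hr : x ^ 2 + y ^ 2 ≠ 0) :
    HasDerivAt (fun t => V α t y)
      ((α + 2) * x * (α * (x ^ 2 + y ^ 2) ^ (-(α / 2) - 1) - 1)) x := by
  simp only [V_eq_rpow_neg]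
  refine (((hasDerivAt_pow 2 x).const_mul (-((α + 2) / 2))).sub
    ((hasDerivAt_sq_add_rpow (y ^ 2) (-(α / 2)) x hr).const_mul (α + 2))).congr_deriv ?_
  ring

lemma hasDerivAt_V_snd (α x y : ℝ) (hr : x ^ 2 + y ^ 2 ≠ 0) :
    HasDerivAt (fun t => V α x t) ((α + 2) * y * (α * (x ^ 2 + y ^ 2) ^ (-(α / 2) - 1))) y := by
  rw [add_comm] at hr ⊢
  simp only [V_eq_rpow_neg, add_comm (x ^ 2)]
  refine (((hasDerivAt_sq_add_rpow (x ^ 2) (-(α / 2)) y hr).const_mul (α + 2)).const_sub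
    (-((α + 2) / 2) * x ^ 2)).congr_deriv ?_
  ring

lemma mul_sq_rpow_eq_one_iff {α x : ℝ} (hα : 0 ≤ α) (hx : x ≠ 0) :
    α * (x ^ 2) ^ (-(α / 2) - 1) = 1 ↔ |x| = α ^ (1 / (α + 2)) := by
  have hsq : (x ^ 2) ^ (-(α / 2) - 1) = (|x| ^ (α + 2))⁻¹ := by
    rw [← sq_abs, ← rpow_two, ← rpow_mul (abs_nonneg x), ← rpow_neg (abs_nonneg x)]
    ring_nf
  rw [hsq, mul_inv_eq_one₀ (by positivity), one_div,
    eq_rpow_inv (abs_nonneg x) hα (by linarith), eq_comm]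

theorem critical_points_of_V (α : ℝ) (hα : 0 < α) (x y : ℝ) (h : (x, y) ≠ (0, 0)) :
    (Vx α x y = 0 ∧ Vy α x y = 0) ↔
      ((x, y) = (α ^ (1 / (α + 2)), 0) ∨ (x, y) = (-(α ^ (1 / (α + 2))), 0)) := by
  have hr : x ^ 2 + y ^ 2 ≠ 0 := by simpa [sq, mul_self_add_mul_self_eq_zero] using h
  have hq : (x ^ 2 + y ^ 2) ^ (-(α / 2) - 1) ≠ 0 :=
    (rpow_ne_zero (by positivity) (by linarith)).mpr hr
  rw [Vx, Vy, (hasDerivAt_V_fst α x y hr).deriv, (hasDerivAt_V_snd α x y hr).deriv]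
  simp only [mul_eq_zero, hα.ne', hq, (by linarith : α + 2 ≠ 0), false_or, or_false,
    Prod.mk.injEq, sub_eq_zero, ← or_and_right]
  rcases eq_or_ne y 0 with rfl | hy
  · have hx : x ≠ 0 := by rintro rfl; exact h rfl
    simp only [hx, false_or, and_true, ← abs_eq (rpow_nonneg hα.le _)]
    simpa using mul_sq_rpow_eq_one_iff hα.le hx
  · simp [hy]
end

section
/- The infimum of the energy E(x,y,ẋ,ẏ) = (1/2)(ẋ²+ẏ²) + V(x,y) over the constraint set {W(x,y) = 0} equals E* = -(1/2)(α+2)² α^(-α/(α+2)), and it is attained exactly at the points (±α^(1/(α+2)), 0, 0, 0). -/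
noncomputable def W (α x y : ℝ) : ℝ :=
  (α + 2) * (x ^ 2 - α / (x ^ 2 + y ^ 2) ^ (α / 2))

noncomputable def E (α x y vx vy : ℝ) : ℝ := (1 / 2) * (vx ^ 2 + vy ^ 2) + V α x y

noncomputable def Estar (α : ℝ) : ℝ := -(1 / 2) * (α + 2) ^ 2 * α ^ (-(α / (α + 2)))

/-! On the constraint `W = 0`, i.e. `x² r^(α/2) = α` with `r = x² + y²`, the Coulomb term
`(α+2)/r^(α/2)` equals `(α+2)x²/α`, so `E = |v|²/2 - (α+2)²/(2α) x²`. Since `r ≥ x²`, the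
constraint forces `(x²)^((α+2)/2) ≤ α`, i.e. `x² ≤ α^(2/(α+2))`, strictly unless `y = 0`.
Hence `E ≥ -(α+2)²/(2α) α^(2/(α+2)) = E*`, with equality iff `v = 0`, `y = 0` and
`x² = α^(2/(α+2))`. -/

section GroundState

open Real

variable {α x y : ℝ}

lemma mul_rpow_half_eq_rpow {t : ℝ} (ht : 0 < t) : t * t ^ (α / 2) = t ^ ((α + 2) / 2) := by
  rw [add_div, div_self two_ne_zero, rpow_add_one ht.ne', mul_comm]

lemma sq_rpow_one_div_add_two_rpow (hα : 0 < α) :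
    ((α ^ (1 / (α + 2))) ^ 2) ^ ((α + 2) / 2) = α := by
  rw [← rpow_natCast, ← rpow_mul (rpow_nonneg hα.le _), ← rpow_mul hα.le]
  convert rpow_one α using 2
  field_simp
  norm_num

lemma W_eq_zero_iff (hα : α + 2 ≠ 0) (hr : 0 < x ^ 2 + y ^ 2) :
    W α x y = 0 ↔ x ^ 2 * (x ^ 2 + y ^ 2) ^ (α / 2) = α := by
  rw [W, mul_eq_zero, sub_eq_zero, eq_div_iff (rpow_pos_of_pos hr _).ne']
  simp [hα]

lemma E_eq_of_mul_rpow_eq (hα : α ≠ 0) (h : x ^ 2 * (x ^ 2 + y ^ 2) ^ (α / 2) = α)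
    (vx vy : ℝ) :
    E α x y vx vy = 1 / 2 * (vx ^ 2 + vy ^ 2) - (α + 2) ^ 2 / (2 * α) * x ^ 2 := by
  have hx : x ^ 2 ≠ 0 := left_ne_zero_of_mul (h ▸ hα)
  rw [E, V, show (x ^ 2 + y ^ 2) ^ (α / 2) = α / x ^ 2 by rw [eq_div_iff hx]; linarith]
  field_simp
  ring

lemma Estar_eq_neg_mul_sq (hα : 0 < α) :
    Estar α = -((α + 2) ^ 2 / (2 * α)) * (α ^ (1 / (α + 2))) ^ 2 := by
  have hexp : -(α / (α + 2)) = 1 / (α + 2) * (2 : ℕ) - 1 := by field_simp; ring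
  rw [Estar, hexp, rpow_sub_one hα.ne', rpow_mul hα.le, rpow_natCast]
  field_simp

lemma sq_pos_of_mul_rpow_eq (hα : α ≠ 0) (h : x ^ 2 * (x ^ 2 + y ^ 2) ^ (α / 2) = α) :
    0 < x ^ 2 :=
  (sq_nonneg x).lt_of_ne' fun hx ↦ hα (by simpa [hx] using h.symm)

lemma sq_rpow_lt_of_mul_rpow_eq (hα : 0 < α) (hy : y ≠ 0)
    (h : x ^ 2 * (x ^ 2 + y ^ 2) ^ (α / 2) = α) : (x ^ 2) ^ ((α + 2) / 2) < α := by
  have hx := sq_pos_of_mul_rpow_eq hα.ne' h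
  calc (x ^ 2) ^ ((α + 2) / 2) = x ^ 2 * (x ^ 2) ^ (α / 2) := (mul_rpow_half_eq_rpow hx).symm
    _ < x ^ 2 * (x ^ 2 + y ^ 2) ^ (α / 2) := by
      gcongr
      exact lt_add_of_pos_right _ (by positivity)
    _ = α := h

lemma sq_rpow_le_of_mul_rpow_eq (hα : 0 < α) (h : x ^ 2 * (x ^ 2 + y ^ 2) ^ (α / 2) = α) :
    (x ^ 2) ^ ((α + 2) / 2) ≤ α := by
  obtain rfl | hy := eq_or_ne y 0
  · rw [← mul_rpow_half_eq_rpow (sq_pos_of_mul_rpow_eq hα.ne' h)]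
    simpa using h.le
  · exact (sq_rpow_lt_of_mul_rpow_eq hα hy h).le

lemma sq_lt_of_mul_rpow_eq (hα : 0 < α) (hy : y ≠ 0)
    (h : x ^ 2 * (x ^ 2 + y ^ 2) ^ (α / 2) = α) : x ^ 2 < (α ^ (1 / (α + 2))) ^ 2 := by
  rw [← rpow_lt_rpow_iff (sq_nonneg _) (sq_nonneg _) (by positivity : 0 < (α + 2) / 2),
    sq_rpow_one_div_add_two_rpow hα]
  exact sq_rpow_lt_of_mul_rpow_eq hα hy h

lemma sq_le_of_mul_rpow_eq (hα : 0 < α) (h : x ^ 2 * (x ^ 2 + y ^ 2) ^ (α / 2) = α) :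
    x ^ 2 ≤ (α ^ (1 / (α + 2))) ^ 2 := by
  rw [← rpow_le_rpow_iff (sq_nonneg _) (sq_nonneg _) (by positivity : 0 < (α + 2) / 2),
    sq_rpow_one_div_add_two_rpow hα]
  exact sq_rpow_le_of_mul_rpow_eq hα h

lemma E_sub_Estar_of_mul_rpow_eq (hα : 0 < α) (h : x ^ 2 * (x ^ 2 + y ^ 2) ^ (α / 2) = α)
    (vx vy : ℝ) :
    E α x y vx vy - Estar α =
      1 / 2 * (vx ^ 2 + vy ^ 2) + (α + 2) ^ 2 / (2 * α) * ((α ^ (1 / (α + 2))) ^ 2 - x ^ 2) := by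
  rw [E_eq_of_mul_rpow_eq hα.ne' h, Estar_eq_neg_mul_sq hα]
  ring

lemma mul_rpow_eq_of_sq_eq (hα : 0 < α) (hx : x ^ 2 = (α ^ (1 / (α + 2))) ^ 2) :
    x ^ 2 * (x ^ 2 + 0 ^ 2) ^ (α / 2) = α := by
  rw [zero_pow two_ne_zero, add_zero, mul_rpow_half_eq_rpow (hx ▸ by positivity), hx,
    sq_rpow_one_div_add_two_rpow hα]

lemma sq_add_sq_pos_of_ne (h : (x, y) ≠ (0, 0)) : 0 < x ^ 2 + y ^ 2 := by
  refine (add_nonneg (sq_nonneg x) (sq_nonneg y)).lt_of_ne' fun h0 ↦ h ?_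
  simpa [sq, mul_self_add_mul_self_eq_zero] using h0

lemma mul_rpow_eq_of_W_eq_zero (hα : 0 < α) (hne : (x, y) ≠ (0, 0)) (hW : W α x y = 0) :
    x ^ 2 * (x ^ 2 + y ^ 2) ^ (α / 2) = α :=
  (W_eq_zero_iff (by linarith) (sq_add_sq_pos_of_ne hne)).1 hW

lemma Estar_le_E_of_mul_rpow_eq (hα : 0 < α) (h : x ^ 2 * (x ^ 2 + y ^ 2) ^ (α / 2) = α)
    (vx vy : ℝ) : Estar α ≤ E α x y vx vy := by
  have hE := E_sub_Estar_of_mul_rpow_eq hα h vx vy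
  have hκ : 0 < (α + 2) ^ 2 / (2 * α) := by positivity
  nlinarith [sq_le_of_mul_rpow_eq hα h, sq_nonneg vx, sq_nonneg vy]

lemma eq_ground_state_of_E_eq_Estar (hα : 0 < α) (h : x ^ 2 * (x ^ 2 + y ^ 2) ^ (α / 2) = α)
    {vx vy : ℝ} (hEq : E α x y vx vy = Estar α) :
    x ^ 2 = (α ^ (1 / (α + 2))) ^ 2 ∧ y = 0 ∧ vx = 0 ∧ vy = 0 := by
  have hE := E_sub_Estar_of_mul_rpow_eq hα h vx vy
  have hle := sq_le_of_mul_rpow_eq hα h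
  have hκ : 0 < (α + 2) ^ 2 / (2 * α) := by positivity
  have hx : x ^ 2 = (α ^ (1 / (α + 2))) ^ 2 := by nlinarith [sq_nonneg vx, sq_nonneg vy]
  have hv : vx ^ 2 + vy ^ 2 = 0 := by nlinarith
  have hy : y = 0 := by
    by_contra hy
    exact (sq_lt_of_mul_rpow_eq hα hy h).ne hx
  simpa [hx, hy, sq, mul_self_add_mul_self_eq_zero] using hv

lemma ground_state_spec (hα : 0 < α) (hx : x ^ 2 = (α ^ (1 / (α + 2))) ^ 2) :
    (x, (0 : ℝ)) ≠ (0, 0) ∧ W α x 0 = 0 ∧ E α x 0 0 0 = Estar α := by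
  have h := mul_rpow_eq_of_sq_eq hα hx
  have hne : (x, (0 : ℝ)) ≠ (0, 0) := by
    simpa using (sq_pos_of_mul_rpow_eq hα.ne' h).ne'
  refine ⟨hne, (W_eq_zero_iff (by linarith) (sq_add_sq_pos_of_ne hne)).2 h, ?_⟩
  rw [← sub_eq_zero, E_sub_Estar_of_mul_rpow_eq hα h, hx]
  ring

end GroundState

/-- The ground state energy `E*` is the minimum of the energy over the constraint set
`{W = 0}`, attained exactly at the two ground states `(±α^(1/(α+2)), 0, 0, 0)`. -/
theorem ground_state_energy (α : ℝ) (hα : 0 < α) :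
    IsLeast {e : ℝ | ∃ x y vx vy : ℝ, (x, y) ≠ (0, 0) ∧ W α x y = 0 ∧
        e = E α x y vx vy} (Estar α) ∧
    (∀ x y vx vy : ℝ, (x, y) ≠ (0, 0) → W α x y = 0 →
      (E α x y vx vy = Estar α ↔
        (x, y, vx, vy) = (α ^ (1 / (α + 2)), 0, 0, 0) ∨
        (x, y, vx, vy) = (-(α ^ (1 / (α + 2))), 0, 0, 0))) := by
  obtain ⟨hne, hW, hE⟩ := ground_state_spec hα (x := α ^ (1 / (α + 2))) rfl
  refine ⟨⟨⟨_, 0, 0, 0, hne, hW, hE.symm⟩, ?_⟩, fun x y vx vy hne hW ↦ ⟨fun hEq ↦ ?_, ?_⟩⟩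
  · rintro e ⟨x, y, vx, vy, hne, hW, rfl⟩
    exact Estar_le_E_of_mul_rpow_eq hα (mul_rpow_eq_of_W_eq_zero hα hne hW) vx vy
  · obtain ⟨hx, rfl, rfl, rfl⟩ :=
      eq_ground_state_of_E_eq_Estar hα (mul_rpow_eq_of_W_eq_zero hα hne hW) hEq
    rcases sq_eq_sq_iff_eq_or_eq_neg.1 hx with rfl | rfl <;> simp
  · rintro (h | h) <;> obtain ⟨rfl, rfl, rfl, rfl⟩ := Prod.mk.injEq .. ▸ h
    exacts [hE, (ground_state_spec hα (neg_sq _)).2.2]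
end

section
/- If c < E*, then the Hill's region H_c = {(x,y) ≠ (0,0) : V(x,y) ≤ c} does not intersect the zero set of W: for all (x,y) in H_c, W(x,y) ≠ 0. -/
/-- Below the ground state energy, the Hill's region avoids the zero set of `W`. -/
theorem hills_region_avoids_W_zero (α : ℝ) (hα : 0 < α) (c : ℝ) (hc : c < Estar α)
    (x y : ℝ) (h : (x, y) ≠ (0, 0)) (hV : V α x y ≤ c) :
    W α x y ≠ 0 := by
  intro hW
  have h2 : (α + 2) ≠ 0 := by linarith
  have hu : 0 < x ^ 2 + y ^ 2 := by
    simp only [ne_eq, Prod.mk.injEq, not_and_or] at h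
    rcases h with h | h <;> positivity
  set s : ℝ := (x ^ 2 + y ^ 2) ^ (α / 2) with hsdef
  have hs : 0 < s := Real.rpow_pos_of_pos hu _
  have hx2 : x ^ 2 = α / s := by
    have := mul_eq_zero.mp hW
    rcases this with h' | h'
    · exact absurd h' h2
    · linarith
  have hle : α / s ≤ x ^ 2 + y ^ 2 := by nlinarith [sq_nonneg y]
  have key : α ≤ (x ^ 2 + y ^ 2) ^ ((α + 2) / 2) := by
    have h1 : α ≤ (x ^ 2 + y ^ 2) * s := (div_le_iff₀ hs).mp hle
    calc α ≤ (x ^ 2 + y ^ 2) * s := h1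
      _ = (x ^ 2 + y ^ 2) ^ ((α + 2) / 2) := by
          rw [show (α + 2) / 2 = 1 + α / 2 by ring, Real.rpow_add hu, Real.rpow_one, hsdef]
  have hA : 0 < α ^ (α / (α + 2)) := Real.rpow_pos_of_pos hα _
  have key2 : α ^ (α / (α + 2)) ≤ s := by
    have h1 : α ^ (α / (α + 2)) ≤ ((x ^ 2 + y ^ 2) ^ ((α + 2) / 2)) ^ (α / (α + 2)) :=
      Real.rpow_le_rpow hα.le key (by positivity)
    have h3 : (α + 2) / 2 * (α / (α + 2)) = α / 2 := by field_simp
    rwa [← Real.rpow_mul hu.le, h3] at h1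
  have hVeq : V α x y = -((α + 2) ^ 2 / 2) / s := by
    rw [V, ← hsdef, hx2]
    field_simp
    ring
  have hEeq : Estar α = -((α + 2) ^ 2 / 2) / α ^ (α / (α + 2)) := by
    rw [Estar, Real.rpow_neg hα.le]
    field_simp
  have hdiv : (α + 2) ^ 2 / 2 / s ≤ (α + 2) ^ 2 / 2 / α ^ (α / (α + 2)) :=
    div_le_div_of_nonneg_left (by positivity) hA key2
  have hE : Estar α ≤ V α x y := by
    rw [hVeq, hEeq]
    simp only [neg_div]
    linarith
  linarith
end

section
/- For a solution in W₋ (energy below E* and W ≤ 0 along the trajectory), the position (x(t),y(t)) remains in a bounded region: specifically W(x,y) < 0 implies x² < α/r^α and simultaneously V(x,y) ≤ E < E* < 0 yields a uniform bound r(t) ≤ C(α, E) for all t in the interval of existence. -/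
/-- A solution in `W₋` (energy `e < E*` and `W ≤ 0` along the trajectory) stays in a
bounded region, with the bound depending only on `α` and the energy `e`. -/
theorem Wminus_solutions_bounded (α : ℝ) (hα : 0 < α) (e : ℝ) (he : e < Estar α) :
    ∃ C : ℝ, ∀ (I : Set ℝ) (x y x' y' : ℝ → ℝ),
      (∀ t ∈ I, HasDerivAt x (x' t) t) → (∀ t ∈ I, HasDerivAt y (y' t) t) →
      (∀ t ∈ I, (x t, y t) ≠ (0, 0)) →
      (∀ t ∈ I, W α (x t) (y t) ≤ 0) →
      (∀ t ∈ I, (1 / 2) * ((x' t) ^ 2 + (y' t) ^ 2) + V α (x t) (y t) = e) →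
      ∀ t ∈ I, (x t) ^ 2 + (y t) ^ 2 ≤ C ^ 2 := by
  have hE : Estar α < 0 := by
    unfold Estar
    have h1 : (0:ℝ) < (α + 2) ^ 2 := by positivity
    have h2 : (0:ℝ) < α ^ (-(α / (α + 2))) := Real.rpow_pos_of_pos hα _
    nlinarith
  have he0 : e < 0 := lt_trans he hE
  have hne0 : 0 < -e := by linarith
  set M := (α + 2) ^ 2 / (2 * (-e)) with hMdef
  have hM0 : 0 < M := by positivity
  refine ⟨M ^ (1 / α), ?_⟩
  intro I x y x' y' hx hy hnz hW hEn t ht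
  set s := x t ^ 2 + y t ^ 2 with hsdef
  have hs0 : 0 < s := by
    have h := hnz t ht
    rcases eq_or_ne (x t) 0 with hx0 | hx0
    · rcases eq_or_ne (y t) 0 with hy0 | hy0
      · exact absurd (by rw [hx0, hy0]) h
      · have : 0 < y t ^ 2 := by positivity
        nlinarith [sq_nonneg (x t)]
    · have : 0 < x t ^ 2 := by positivity
      nlinarith [sq_nonneg (y t)]
  set p := s ^ (α / 2) with hpdef
  have hp0 : 0 < p := Real.rpow_pos_of_pos hs0 _
  have hx2 : x t ^ 2 ≤ α / p := by
    have h := hW t ht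
    unfold W at h
    rw [← hsdef, ← hpdef] at h
    nlinarith
  have hV : V α (x t) (y t) ≤ e := by
    have h := hEn t ht
    nlinarith [sq_nonneg (x' t), sq_nonneg (y' t)]
  have key : -((α + 2) ^ 2) / (2 * p) ≤ e := by
    unfold V at hV
    rw [← hsdef, ← hpdef] at hV
    have h1 : -((α + 2) / 2) * (α / p) - (α + 2) / p = -((α + 2) ^ 2) / (2 * p) := by
      field_simp
      ring
    nlinarith [div_pos hα hp0, mul_pos hp0 hp0]
  have hpM : p ≤ M := by
    rw [hMdef, le_div_iff₀ (by positivity)]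
    have h2 : -((α + 2) ^ 2) ≤ e * (2 * p) := by
      have := (div_le_iff₀ (by positivity : (0:ℝ) < 2 * p)).mp key
      linarith
    nlinarith
  have hsp : s = p ^ (2 / α) := by
    rw [hpdef, ← Real.rpow_mul hs0.le]
    rw [show α / 2 * (2 / α) = 1 by field_simp, Real.rpow_one]
  have hC2 : (M ^ (1 / α)) ^ 2 = M ^ (2 / α) := by
    rw [← Real.rpow_natCast (M ^ (1 / α)) 2, ← Real.rpow_mul hM0.le]
    congr 1
    push_cast
    field_simp
  rw [hsp, hC2]
  exact Real.rpow_le_rpow hp0.le hpM (by positivity)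
end
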